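/- For any proof system Λ extending R^Δ, the minimal canonical model M₀^Λ has property (c): for every s ∈ S^Λ, if X ∈ N₀^Λ(s) and Y ∈ N₀^Λ(s) then X ∩ Y ∈ N₀^Λ(s). Consequently its supplementation (M₀^Λ)⁺ is an (mc)-model. -/
import Mathlib


/-- The language L(Δ) of contingency logic: φ ::= p | ¬φ | (φ ∧ φ) | Δφ. -/
inductive Formula (P : Type) : Type
  | atom : P → Formula P
  | neg : Formula P → Formula P
  | and : Formula P → Formula P → Formula P
  | delta : Formula P → Formula P

namespace Formula

variable {P : Type}

/-- φ ∨ ψ abbreviates ¬(¬φ ∧ ¬ψ). -/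
def or (φ ψ : Formula P) : Formula P := neg (and (neg φ) (neg ψ))

/-- φ → ψ abbreviates ¬(φ ∧ ¬ψ). -/
def imp (φ ψ : Formula P) : Formula P := neg (and φ (neg ψ))

/-- φ ↔ ψ abbreviates (φ → ψ) ∧ (ψ → φ). -/
def iffF (φ ψ : Formula P) : Formula P := and (imp φ ψ) (imp ψ φ)

end Formula

/-- ⊤ : a fixed tautology (p ∨ ¬p for a fixed propositional variable p). -/
noncomputable def Formula.top (P : Type) [Nonempty P] : Formula P :=
  Formula.or (Formula.atom (Classical.arbitrary P))
    (Formula.neg (Formula.atom (Classical.arbitrary P)))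

/-- A neighborhood model ⟨S, N, V⟩: a nonempty set of states `S`, a neighborhood
function `N : S → P(P(S))` and a valuation `V`. -/
structure NbhdModel (P : Type) where
  S : Type
  nonempty : Nonempty S
  N : S → Set (Set S)
  V : P → Set S

/-- The truth set ⟦φ⟧ of a formula in a neighborhood model; the clause for `Δφ` says
that a state `s` satisfies `Δφ` iff ⟦φ⟧ ∈ N(s) or S ∖ ⟦φ⟧ ∈ N(s). -/
def NbhdModel.truthSet {P : Type} (M : NbhdModel P) : Formula P → Set M.S
  | .atom p => M.V p
  | .neg φ => (M.truthSet φ)ᶜ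
  | .and φ ψ => M.truthSet φ ∩ M.truthSet ψ
  | .delta φ => {s | M.truthSet φ ∈ M.N s ∨ (M.truthSet φ)ᶜ ∈ M.N s}

/-- Satisfaction: M,s ⊨ φ. -/
def NbhdModel.sat {P : Type} (M : NbhdModel P) (s : M.S) (φ : Formula P) : Prop :=
  s ∈ M.truthSet φ

/-- Frame property (m): closure under supersets. -/
def SupersetClosed {S : Type} (N : S → Set (Set S)) : Prop :=
  ∀ s : S, ∀ X Y : Set S, X ∈ N s → X ⊆ Y → Y ∈ N s

/-- Frame property (c): closure under binary intersections. -/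
def InterClosed {S : Type} (N : S → Set (Set S)) : Prop :=
  ∀ s : S, ∀ X Y : Set S, X ∈ N s → Y ∈ N s → X ∩ Y ∈ N s

/-- Frame property (n): contains the unit. -/
def ContainsUnit {S : Type} (N : S → Set (Set S)) : Prop :=
  ∀ s : S, (Set.univ : Set S) ∈ N s

/-- Frame property (z): closure under complements. -/
def ComplClosed {S : Type} (N : S → Set (Set S)) : Prop :=
  ∀ s : S, ∀ X : Set S, X ∈ N s → Xᶜ ∈ N s

/-- The supplementation of a neighborhood function:
`N⁺(s) = {X ⊆ S : Y ⊆ X for some Y ∈ N(s)}`. -/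
def suppN {S : Type} (N : S → Set (Set S)) (s : S) : Set (Set S) :=
  {X | ∃ Y ∈ N s, Y ⊆ X}

/-- `φ` is a substitution instance of a propositional tautology: every Boolean valuation
of formulas that respects `¬` and `∧` (treating atoms and Δ-formulas as atomic) makes
`φ` true. -/
def Tautology {P : Type} (φ : Formula P) : Prop :=
  ∀ v : Formula P → Bool,
    (∀ ψ, v (Formula.neg ψ) = !(v ψ)) →
    (∀ ψ χ, v (Formula.and ψ χ) = (v ψ && v χ)) →
    v φ = true

/-- A proof system of contingency logic, given by its set of theorems: it contains all
propositional tautologies and is closed under modus ponens and the rule REΔ. -/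
structure Sys (P : Type) where
  thm : Set (Formula P)
  taut : ∀ φ : Formula P, Tautology φ → φ ∈ thm
  mp : ∀ φ ψ : Formula P, Formula.imp φ ψ ∈ thm → φ ∈ thm → ψ ∈ thm
  re : ∀ φ ψ : Formula P, Formula.iffF φ ψ ∈ thm →
         Formula.iffF (Formula.delta φ) (Formula.delta ψ) ∈ thm

/-- The system contains the axiom ΔEqu: Δφ ↔ Δ¬φ. -/
def HasDeltaEqu {P : Type} (Λ : Sys P) : Prop :=
  ∀ φ : Formula P,
    Formula.iffF (Formula.delta φ) (Formula.delta (Formula.neg φ)) ∈ Λ.thm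

/-- The system contains the axiom ΔM: Δφ → Δ(φ ∨ ψ) ∨ Δ(¬φ ∨ χ). -/
def HasDeltaM {P : Type} (Λ : Sys P) : Prop :=
  ∀ φ ψ χ : Formula P,
    Formula.imp (Formula.delta φ)
      (Formula.or (Formula.delta (Formula.or φ ψ))
                  (Formula.delta (Formula.or (Formula.neg φ) χ))) ∈ Λ.thm

/-- The system contains the axiom ΔC: (Δφ ∧ Δψ) → Δ(φ ∧ ψ). -/
def HasDeltaC {P : Type} (Λ : Sys P) : Prop :=
  ∀ φ ψ : Formula P,
    Formula.imp (Formula.and (Formula.delta φ) (Formula.delta ψ))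
      (Formula.delta (Formula.and φ ψ)) ∈ Λ.thm

/-- Derivability of `φ` from premises `Γ` in the system `Λ`. -/
inductive SDerivFrom {P : Type} (Λ : Sys P) (Γ : Set (Formula P)) : Formula P → Prop
  | mem {φ} (h : φ ∈ Γ) : SDerivFrom Λ Γ φ
  | thm {φ} (h : φ ∈ Λ.thm) : SDerivFrom Λ Γ φ
  | mp {φ ψ} (h1 : SDerivFrom Λ Γ (Formula.imp φ ψ)) (h2 : SDerivFrom Λ Γ φ) :
      SDerivFrom Λ Γ ψ

/-- `Γ` is Λ-consistent. -/
def SConsistent {P : Type} (Λ : Sys P) (Γ : Set (Formula P)) : Prop :=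
  ¬ ∃ φ : Formula P, SDerivFrom Λ Γ φ ∧ SDerivFrom Λ Γ (Formula.neg φ)

/-- `s` is a maximal Λ-consistent set of formulas. -/
def MCS {P : Type} (Λ : Sys P) (s : Set (Formula P)) : Prop :=
  SConsistent Λ s ∧ ∀ φ : Formula P, φ ∈ s ∨ Formula.neg φ ∈ s

/-- The proof set |φ| = {s ∈ S^Λ : φ ∈ s}, where S^Λ is the set of maximal
Λ-consistent sets. -/
def proofSet {P : Type} (Λ : Sys P) (φ : Formula P) :
    Set {s : Set (Formula P) // MCS Λ s} :=
  {s | φ ∈ s.val}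

/-- The neighborhood function of the minimal canonical model:
N₀^Λ(s) = { |φ| : Δ(φ ∨ ψ) ∈ s for every formula ψ }. -/
def minN {P : Type} (Λ : Sys P) (s : {s : Set (Formula P) // MCS Λ s}) :
    Set (Set {s : Set (Formula P) // MCS Λ s}) :=
  {X | ∃ φ : Formula P,
     X = proofSet Λ φ ∧ ∀ ψ : Formula P, Formula.delta (Formula.or φ ψ) ∈ s.val}

section Aux

variable {P : Type}

lemma mcs_closed {Λ : Sys P} {s : Set (Formula P)} (hs : MCS Λ s)
    {φ : Formula P} (h : SDerivFrom Λ s φ) : φ ∈ s := by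
  rcases hs.2 φ with h1 | h1
  · exact h1
  · exact absurd ⟨φ, h, SDerivFrom.mem h1⟩ hs.1

lemma taut_and_left (a b : Formula P) :
    Tautology (Formula.imp (Formula.and a b) a) := by
  intro v hn ha
  simp only [Formula.imp, ha, hn]
  cases v a <;> cases v b <;> rfl

lemma taut_and_right (a b : Formula P) :
    Tautology (Formula.imp (Formula.and a b) b) := by
  intro v hn ha
  simp only [Formula.imp, ha, hn]
  cases v a <;> cases v b <;> rfl

lemma taut_and_intro (a b : Formula P) :
    Tautology (Formula.imp a (Formula.imp b (Formula.and a b))) := by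
  intro v hn ha
  simp only [Formula.imp, ha, hn]
  cases v a <;> cases v b <;> rfl

/-- ((φ∨ψ) ∧ (χ∨ψ)) ↔ ((φ∧χ) ∨ ψ) is a tautology. -/
lemma taut_distrib (a b c : Formula P) :
    Tautology (Formula.iffF (Formula.and (Formula.or a c) (Formula.or b c))
      (Formula.or (Formula.and a b) c)) := by
  intro v hn ha
  simp only [Formula.iffF, Formula.imp, Formula.or, ha, hn]
  cases v a <;> cases v b <;> cases v c <;> rfl

/-- From an iff theorem, get the forward implication theorem. -/
lemma thm_iff_mp {Λ : Sys P} {a b : Formula P}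
    (h : Formula.iffF a b ∈ Λ.thm) : Formula.imp a b ∈ Λ.thm :=
  Λ.mp _ _ (Λ.taut _ (taut_and_left _ _)) h

lemma mcs_and_mem {Λ : Sys P} {s : Set (Formula P)} (hs : MCS Λ s)
    {a b : Formula P} (haa : a ∈ s) (hbb : b ∈ s) : Formula.and a b ∈ s :=
  mcs_closed hs (SDerivFrom.mp
    (SDerivFrom.mp (SDerivFrom.thm (Λ.taut _ (taut_and_intro a b)))
      (SDerivFrom.mem haa)) (SDerivFrom.mem hbb))

lemma mcs_and_elim {Λ : Sys P} {s : Set (Formula P)} (hs : MCS Λ s)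
    {a b : Formula P} (h : Formula.and a b ∈ s) : a ∈ s ∧ b ∈ s :=
  ⟨mcs_closed hs (SDerivFrom.mp (SDerivFrom.thm (Λ.taut _ (taut_and_left a b)))
      (SDerivFrom.mem h)),
   mcs_closed hs (SDerivFrom.mp (SDerivFrom.thm (Λ.taut _ (taut_and_right a b)))
      (SDerivFrom.mem h))⟩

lemma proofSet_and (Λ : Sys P) (a b : Formula P) :
    proofSet Λ (Formula.and a b) = proofSet Λ a ∩ proofSet Λ b := by
  ext t
  constructor
  · exact fun h => mcs_and_elim t.2 h
  · exact fun h => mcs_and_mem t.2 h.1 h.2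

end Aux

/-- for any proof system Λ extending R^Δ = M^Δ + ΔC, the minimal
canonical model has property (c), and consequently its supplementation is an
(mc)-model. -/
theorem minimal_canonical_has_c {P : Type} (Λ : Sys P)
    (hequ : HasDeltaEqu Λ) (hdm : HasDeltaM Λ) (hdc : HasDeltaC Λ) :
    InterClosed (minN Λ) ∧
    SupersetClosed (suppN (minN Λ)) ∧ InterClosed (suppN (minN Λ)) := by
  have hc : InterClosed (minN Λ) := by
    intro s X Y hX hY
    obtain ⟨φ, rfl, hφ⟩ := hX
    obtain ⟨χ, rfl, hχ⟩ := hY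
    refine ⟨Formula.and φ χ, (proofSet_and Λ φ χ).symm, fun ψ => ?_⟩
    have h1 : Formula.and (Formula.delta (Formula.or φ ψ))
        (Formula.delta (Formula.or χ ψ)) ∈ s.val :=
      mcs_and_mem s.2 (hφ ψ) (hχ ψ)
    have h2 : Formula.delta (Formula.and (Formula.or φ ψ) (Formula.or χ ψ)) ∈ s.val :=
      mcs_closed s.2 (SDerivFrom.mp (SDerivFrom.thm (hdc _ _)) (SDerivFrom.mem h1))
    have h3 : Formula.imp
        (Formula.delta (Formula.and (Formula.or φ ψ) (Formula.or χ ψ)))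
        (Formula.delta (Formula.or (Formula.and φ χ) ψ)) ∈ Λ.thm :=
      thm_iff_mp (Λ.re _ _ (Λ.taut _ (taut_distrib φ χ ψ)))
    exact mcs_closed s.2 (SDerivFrom.mp (SDerivFrom.thm h3) (SDerivFrom.mem h2))
  refine ⟨hc, ?_, ?_⟩
  · intro s X Y hX hXY
    obtain ⟨A, hA, hAX⟩ := hX
    exact ⟨A, hA, hAX.trans hXY⟩
  · intro s X Y hX hY
    obtain ⟨A, hA, hAX⟩ := hX
    obtain ⟨B, hB, hBY⟩ := hY
    exact ⟨A ∩ B, hc s A B hA hB, Set.inter_subset_inter hAX hBY⟩
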